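/- arXiv:0707.4385 — 2 statements merged into one kernel-verified Lean document; each statement's English description precedes it below -/
import Mathlib

section
/- For any octonions a, b, c, the real part Re((āb)(ca)) equals |a|² · Re(bc), where |a|² = a·ā. -/
noncomputable section

def Oct : Type := Quaternion ℝ × Quaternion ℝ

namespace Oct

def fst (p : Oct) : Quaternion ℝ := Prod.fst p
def snd (p : Oct) : Quaternion ℝ := Prod.snd p

instance : NormedAddCommGroup Oct :=
  inferInstanceAs (NormedAddCommGroup (Quaternion ℝ × Quaternion ℝ))
instance : NormedSpace ℝ Oct :=
  inferInstanceAs (NormedSpace ℝ (Quaternion ℝ × Quaternion ℝ))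
instance : MeasurableSpace Oct := borel Oct

instance : One Oct := ⟨((1 : Quaternion ℝ), (0 : Quaternion ℝ))⟩

/-- Cayley–Dickson multiplication on 𝕆 = ℍ × ℍ. -/
instance : Mul Oct := ⟨fun p q =>
  (fst p * fst q - star (snd q) * snd p, snd q * fst p + snd p * star (fst q))⟩

/-- Octonionic conjugation. -/
def conj (p : Oct) : Oct := (star (fst p), -(snd p))

/-- Real part of an octonion. -/
def re (p : Oct) : ℝ := (fst p).re

/-- |p|² = Re(p p̄). -/
def normSq (p : Oct) : ℝ := re (p * conj p)

/-- Embedding of the reals into the octonions. -/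
def ofReal (r : ℝ) : Oct := ((r : Quaternion ℝ), (0 : Quaternion ℝ))

end Oct


/-! The real part of octonions is a trace: `Re (x y) = Re (y x)` and `Re ((x y) z) = Re (x (y z))`,
both inherited from the cyclicity of the quaternionic real part through the Cayley–Dickson
formulas. Alternativity gives `a (ā b) = |a|² b`. Hence
`Re ((ā b)(c a)) = Re (a ((ā b) c)) = Re ((a (ā b)) c) = |a|² Re (b c)`. -/

theorem Quaternion.re_mul_comm {R : Type*} [CommRing R] (x y : Quaternion R) :
    (x * y).re = (y * x).re := by
  simp only [Quaternion.re_mul]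
  ring

namespace Oct

theorem ext {p q : Oct} (h₁ : fst p = fst q) (h₂ : snd p = snd q) : p = q := Prod.ext h₁ h₂

theorem fst_mul (p q : Oct) : fst (p * q) = fst p * fst q - star (snd q) * snd p := rfl

theorem snd_mul (p q : Oct) : snd (p * q) = snd q * fst p + snd p * star (fst q) := rfl

theorem fst_conj (p : Oct) : fst (conj p) = star (fst p) := rfl

theorem snd_conj (p : Oct) : snd (conj p) = -snd p := rfl

theorem fst_smul (r : ℝ) (p : Oct) : fst (r • p) = r • fst p := rfl

theorem snd_smul (r : ℝ) (p : Oct) : snd (r • p) = r • snd p := rfl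

theorem re_mul (p q : Oct) : re (p * q) = (fst p * fst q).re - (star (snd q) * snd p).re :=
  Quaternion.re_sub _ _

theorem normSq_eq (p : Oct) :
    normSq p = Quaternion.normSq (fst p) + Quaternion.normSq (snd p) := by
  rw [normSq, re_mul, fst_conj, snd_conj, star_neg, neg_mul, Quaternion.re_neg, sub_neg_eq_add,
    ← Quaternion.normSq_def, Quaternion.star_mul_self, Quaternion.re_coe]

theorem re_mul_comm (p q : Oct) : re (p * q) = re (q * p) := by
  rw [re_mul, re_mul, Quaternion.re_mul_comm, ← Quaternion.re_star (star (snd p) * snd q),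
    star_mul, star_star]

theorem re_mul_assoc (p q r : Oct) : re (p * q * r) = re (p * (q * r)) := by
  simp only [re_mul, fst_mul, snd_mul, star_add, star_mul, star_star, mul_add, add_mul, mul_sub,
    sub_mul, Quaternion.re_add, Quaternion.re_sub, mul_assoc]
  -- the remaining terms differ by cyclic rotations of quaternion products
  rw [Quaternion.re_mul_comm (fst r) (star (snd q) * snd p),
    Quaternion.re_mul_comm (fst p) (star (snd r) * snd q),
    Quaternion.re_mul_comm (star (fst q)) (star (snd r) * snd p)]
  simp only [mul_assoc]
  ring

theorem re_smul_mul (r : ℝ) (p q : Oct) : re (r • p * q) = r * re (p * q) := by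
  simp only [re_mul, fst_smul, snd_smul, smul_mul_assoc, mul_smul_comm, Quaternion.re_smul,
    smul_eq_mul, mul_sub]

theorem mul_conj_mul (a b : Oct) : a * (conj a * b) = normSq a • b := by
  apply ext <;>
    simp only [normSq_eq, fst_mul, snd_mul, fst_conj, snd_conj, fst_smul, snd_smul, star_add,
      star_mul, star_neg, star_star, mul_add, add_mul, mul_neg, neg_mul, ← mul_assoc,
      sub_neg_eq_add]
  · rw [Quaternion.self_mul_star, mul_assoc (fst b), Quaternion.star_mul_self,
      Quaternion.coe_mul_eq_smul, Quaternion.mul_coe_eq_smul, add_smul]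
    abel
  · rw [Quaternion.self_mul_star, mul_assoc (snd b), Quaternion.star_mul_self,
      Quaternion.coe_mul_eq_smul, Quaternion.mul_coe_eq_smul, add_smul]
    abel

end Oct

/-- Re((āb)(ca)) = |a|² Re(bc). -/
theorem re_conj_mul (a b c : Oct) :
    Oct.re ((Oct.conj a * b) * (c * a)) = Oct.normSq a * Oct.re (b * c) := by
  open Oct in
  calc re ((conj a * b) * (c * a))
      = re (a * ((conj a * b) * c)) := by rw [← re_mul_assoc, re_mul_comm]
    _ = re ((normSq a • b) * c) := by rw [← re_mul_assoc, mul_conj_mul]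
    _ = normSq a * re (b * c) := re_smul_mul _ _ _
end
end

section
/- If A is a positive definite octonionic hermitian 2×2 matrix, then for any octonionic hermitian 2×2 matrix B the Aleksandrov inequality det(A,B)² ≥ det(A)·det(B) holds, with equality if and only if B is a real scalar multiple of A. -/
noncomputable section

/-- The determinant of an octonionic hermitian 2×2 matrix, encoded as (a, b, q) ∈ ℝ × ℝ × 𝕆. -/
def hermDet (A : ℝ × ℝ × Oct) : ℝ := A.1 * A.2.1 - Oct.normSq A.2.2

/-- The mixed determinant: the symmetric bilinear polarization of `hermDet`. -/
def mixedDet (A B : ℝ × ℝ × Oct) : ℝ :=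
  (A.1 * B.2.1 + B.1 * A.2.1 - 2 * Oct.re (A.2.2 * Oct.conj B.2.2)) / 2

/-!
Since `Oct.re (p * Oct.conj q)` is the Euclidean inner product of `ℍ × ℍ ≅ ℝ⁸`, the space
`ℋ₂(𝕆)` with `det` is Minkowski space `ℝ × ℝ × E`, `(a, c, p) ↦ a c - ‖p‖²`, and the claim is
the reversed Cauchy–Schwarz inequality for a timelike vector `A`. Removing from `B` its
component `t A`, `t = det(A, B) / det A`, leaves `C` with `det(A, C) = 0` and
`det A · det B = det(A, B)² + det A · det C`. The orthogonal complement of a timelike vector is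
negative definite, so `det C ≤ 0`, with equality only for `C = 0`, i.e. `B = t A`.
-/

open scoped RealInnerProductSpace

section Minkowski

variable {E : Type*} [NormedAddCommGroup E] [InnerProductSpace ℝ E]

def minkowskiQuad (A : ℝ × ℝ × E) : ℝ := A.1 * A.2.1 - ‖A.2.2‖ ^ 2

def minkowskiPolar (A B : ℝ × ℝ × E) : ℝ := (A.1 * B.2.1 + B.1 * A.2.1 - 2 * ⟪A.2.2, B.2.2⟫) / 2

theorem minkowskiPolar_smul_right (A B : ℝ × ℝ × E) (t : ℝ) :
    minkowskiPolar A (t • B) = t * minkowskiPolar A B := by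
  simp only [minkowskiPolar, Prod.smul_fst, Prod.smul_snd, smul_eq_mul, real_inner_smul_right]
  ring

theorem minkowskiPolar_self (A : ℝ × ℝ × E) : minkowskiPolar A A = minkowskiQuad A := by
  simp only [minkowskiPolar, minkowskiQuad, real_inner_self_eq_norm_sq]
  ring

theorem minkowskiQuad_smul (A : ℝ × ℝ × E) (t : ℝ) :
    minkowskiQuad (t • A) = t ^ 2 * minkowskiQuad A := by
  simp only [minkowskiQuad, Prod.smul_fst, Prod.smul_snd, smul_eq_mul, norm_smul, Real.norm_eq_abs,
    mul_pow, sq_abs]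
  ring

theorem minkowskiPolar_sub_smul (A B : ℝ × ℝ × E) (t : ℝ) :
    minkowskiPolar A (B - t • A) = minkowskiPolar A B - t * minkowskiQuad A := by
  simp only [minkowskiPolar, minkowskiQuad, Prod.fst_sub, Prod.snd_sub, Prod.smul_fst,
    Prod.smul_snd, smul_eq_mul, inner_sub_right, real_inner_smul_right,
    real_inner_self_eq_norm_sq]
  ring

theorem minkowskiQuad_sub_smul (A B : ℝ × ℝ × E) (t : ℝ) :
    minkowskiQuad (B - t • A) =
      minkowskiQuad B - 2 * t * minkowskiPolar A B + t ^ 2 * minkowskiQuad A := by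
  simp only [minkowskiPolar, minkowskiQuad, Prod.fst_sub, Prod.snd_sub, Prod.smul_fst,
    Prod.smul_snd, smul_eq_mul, norm_sub_sq_real, real_inner_smul_right, norm_smul,
    Real.norm_eq_abs, mul_pow, sq_abs, real_inner_comm A.2.2]
  ring

theorem mul_minkowskiQuad_le_of_minkowskiPolar_eq_zero {A C : ℝ × ℝ × E}
    (h : minkowskiPolar A C = 0) :
    A.1 * A.2.1 * minkowskiQuad C ≤
      -(minkowskiQuad A * ‖C.2.2‖ ^ 2) - ((A.1 * C.2.1 - C.1 * A.2.1) / 2) ^ 2 := by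
  obtain ⟨a, c, p⟩ := A
  obtain ⟨b, d, q⟩ := C
  simp only [minkowskiPolar, minkowskiQuad] at *
  -- `4 a c · b d = (a d + b c)² - (a d - b c)²`, and `a d + b c = 2 ⟪p, q⟫ ≤ 2 ‖p‖ ‖q‖`.
  have hcs : ⟪p, q⟫ ^ 2 ≤ ‖p‖ ^ 2 * ‖q‖ ^ 2 := by
    rw [← mul_pow]
    exact sq_le_sq' (abs_le.mp (abs_real_inner_le_norm p q)).1 (real_inner_le_norm p q)
  have hsum : (a * d + b * c) ^ 2 = 4 * ⟪p, q⟫ ^ 2 := by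
    rw [show a * d + b * c = 2 * ⟪p, q⟫ by linarith]; ring
  linear_combination hcs + hsum / 4

variable {A : ℝ × ℝ × E}

theorem minkowskiQuad_nonpos_of_minkowskiPolar_eq_zero (hA : 0 < minkowskiQuad A)
    {C : ℝ × ℝ × E} (h : minkowskiPolar A C = 0) : minkowskiQuad C ≤ 0 := by
  have hA12 : 0 < A.1 * A.2.1 := by
    unfold minkowskiQuad at hA; linarith [sq_nonneg ‖A.2.2‖]
  refine nonpos_of_mul_nonpos_right ?_ hA12
  linarith [mul_minkowskiQuad_le_of_minkowskiPolar_eq_zero h,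
    mul_nonneg hA.le (sq_nonneg ‖C.2.2‖), sq_nonneg ((A.1 * C.2.1 - C.1 * A.2.1) / 2)]

theorem eq_zero_of_minkowskiPolar_eq_zero_of_minkowskiQuad_eq_zero (hA : 0 < minkowskiQuad A)
    {C : ℝ × ℝ × E} (h : minkowskiPolar A C = 0) (hC : minkowskiQuad C = 0) : C = 0 := by
  have hbound := mul_minkowskiQuad_le_of_minkowskiPolar_eq_zero h
  rw [hC, mul_zero] at hbound
  obtain ⟨a, c, p⟩ := A
  obtain ⟨b, d, q⟩ := C
  simp only [minkowskiQuad, minkowskiPolar] at hA h hbound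
  have hac : a * c ≠ 0 := (by linarith [sq_nonneg ‖p‖] : 0 < a * c).ne'
  have hq : q = 0 := by
    have : (a * c - ‖p‖ ^ 2) * ‖q‖ ^ 2 ≤ 0 := by
      linarith [sq_nonneg ((a * d - b * c) / 2)]
    simpa using le_antisymm (nonpos_of_mul_nonpos_right this hA) (sq_nonneg ‖q‖)
  subst hq
  have hsum : a * d + b * c = 0 := by simpa using h
  have hdiff : a * d - b * c = 0 := by
    simp only [norm_zero] at hbound
    simpa using le_antisymm (by linarith) (sq_nonneg ((a * d - b * c) / 2))
  have hd : d = 0 :=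
    (mul_eq_zero.mp (by linarith : a * d = 0)).resolve_left (left_ne_zero_of_mul hac)
  have hb : b = 0 :=
    (mul_eq_zero.mp (by linarith : b * c = 0)).resolve_right (right_ne_zero_of_mul hac)
  simp [hb, hd]

theorem minkowskiPolar_sub_proj_eq_zero (hA : minkowskiQuad A ≠ 0) (B : ℝ × ℝ × E) :
    minkowskiPolar A (B - (minkowskiPolar A B / minkowskiQuad A) • A) = 0 := by
  rw [minkowskiPolar_sub_smul, div_mul_cancel₀ _ hA, sub_self]

theorem minkowskiQuad_mul_eq_minkowskiPolar_sq_add (hA : minkowskiQuad A ≠ 0)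
    (B : ℝ × ℝ × E) :
    minkowskiQuad A * minkowskiQuad B = minkowskiPolar A B ^ 2 +
      minkowskiQuad A * minkowskiQuad (B - (minkowskiPolar A B / minkowskiQuad A) • A) := by
  rw [minkowskiQuad_sub_smul]
  field_simp
  ring

theorem minkowskiQuad_mul_le_minkowskiPolar_sq (hA : 0 < minkowskiQuad A)
    (B : ℝ × ℝ × E) : minkowskiQuad A * minkowskiQuad B ≤ minkowskiPolar A B ^ 2 := by
  rw [minkowskiQuad_mul_eq_minkowskiPolar_sq_add hA.ne']
  have := minkowskiQuad_nonpos_of_minkowskiPolar_eq_zero hA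
    (minkowskiPolar_sub_proj_eq_zero hA.ne' B)
  nlinarith

theorem minkowskiPolar_sq_eq_iff (hA : 0 < minkowskiQuad A) (B : ℝ × ℝ × E) :
    minkowskiPolar A B ^ 2 = minkowskiQuad A * minkowskiQuad B ↔ ∃ t : ℝ, B = t • A := by
  constructor
  · intro h
    set t := minkowskiPolar A B / minkowskiQuad A
    have hC : minkowskiQuad (B - t • A) = 0 := by
      have := minkowskiQuad_mul_eq_minkowskiPolar_sq_add hA.ne' B
      exact (mul_eq_zero.mp (by linarith)).resolve_left hA.ne'
    exact ⟨t, sub_eq_zero.mp <| eq_zero_of_minkowskiPolar_eq_zero_of_minkowskiQuad_eq_zero hA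
      (minkowskiPolar_sub_proj_eq_zero hA.ne' B) hC⟩
  · rintro ⟨t, rfl⟩
    rw [minkowskiPolar_smul_right, minkowskiPolar_self, minkowskiQuad_smul]
    ring

end Minkowski

namespace Oct

def toL2 : Oct ≃ₗ[ℝ] WithLp 2 (Quaternion ℝ × Quaternion ℝ) :=
  (WithLp.linearEquiv 2 ℝ (Quaternion ℝ × Quaternion ℝ)).symm

theorem re_mul_conj (p q : Oct) : re (p * conj q) = ⟪toL2 p, toL2 q⟫ := by
  change (fst p * star (fst q) - star (-snd q) * snd p).re = ⟪fst p, fst q⟫ + ⟪snd p, snd q⟫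
  simp only [Quaternion.inner_def, star_neg, neg_mul, sub_neg_eq_add, Quaternion.re_add,
    Quaternion.re_mul, Quaternion.re_star, Quaternion.imI_star, Quaternion.imJ_star,
    Quaternion.imK_star]
  ring

theorem normSq_eq_norm_toL2_sq (p : Oct) : normSq p = ‖toL2 p‖ ^ 2 := by
  rw [normSq, re_mul_conj, real_inner_self_eq_norm_sq]

end Oct

def hermToMinkowski : (ℝ × ℝ × Oct) ≃ₗ[ℝ] ℝ × ℝ × WithLp 2 (Quaternion ℝ × Quaternion ℝ) :=
  (LinearEquiv.refl ℝ ℝ).prodCongr ((LinearEquiv.refl ℝ ℝ).prodCongr Oct.toL2)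

theorem hermDet_eq_minkowskiQuad (A : ℝ × ℝ × Oct) :
    hermDet A = minkowskiQuad (hermToMinkowski A) := by
  rw [hermDet, Oct.normSq_eq_norm_toL2_sq]; rfl

theorem mixedDet_eq_minkowskiPolar (A B : ℝ × ℝ × Oct) :
    mixedDet A B = minkowskiPolar (hermToMinkowski A) (hermToMinkowski B) := by
  rw [mixedDet, Oct.re_mul_conj]; rfl

theorem aleksandrov_inequality_general (A B : ℝ × ℝ × Oct)
    (hA2 : 0 < hermDet A) :
    mixedDet A B ^ 2 ≥ hermDet A * hermDet B ∧
      (mixedDet A B ^ 2 = hermDet A * hermDet B ↔ ∃ t : ℝ, B = t • A) := by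
  rw [hermDet_eq_minkowskiQuad] at hA2
  simp only [hermDet_eq_minkowskiQuad, mixedDet_eq_minkowskiPolar]
  refine ⟨minkowskiQuad_mul_le_minkowskiPolar_sq hA2 _,
    (minkowskiPolar_sq_eq_iff hA2 _).trans ?_⟩
  simp only [← map_smul, hermToMinkowski.injective.eq_iff]

/-- Aleksandrov inequality: if A is positive definite then det(A,B)² ≥ det A · det B,
with equality iff B is a real multiple of A. -/
theorem aleksandrov_inequality (A B : ℝ × ℝ × Oct)
    (hA1 : 0 < A.1) (hA2 : 0 < hermDet A) :
    mixedDet A B ^ 2 ≥ hermDet A * hermDet B ∧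
      (mixedDet A B ^ 2 = hermDet A * hermDet B ↔ ∃ t : ℝ, B = t • A) :=
  aleksandrov_inequality_general A B hA2
end
end
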